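/- With the setup of Fano's first decomposition: if Y is a random variable on a finite set 𝒴, Z another random variable, Ỹ = f(Z) an estimator of Y, E the indicator that Ỹ ≠ Y, and p_e = P(E=1), then H(Y|Z) = H(E|Z) + p_e · H(Y | E=1, Z). -/

import Mathlib

/-! For each value `z` of `Z`, the cell `Y = f z` is exactly the event `E = 0`, and the other
cells make up `E = 1`. The grouping rule for `p log (q / p)` (merging cells splits off the
entropy of the merged cell plus the entropy inside it) turns `H(Y|Z)` into `H(E|Z)` plus the
entropy of the mass restricted to `E = 1`; since entropy is homogeneous of degree one in the
mass, normalizing the restriction by its total `p_e` produces the factor `p_e`. -/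

open Finset

/-- `entTerm p q = p * log (q / p)` with the convention `entTerm 0 q = 0`.
A conditional entropy `H(A|B)` is the sum of `entTerm p(a,b) p(b)`. -/
noncomputable def entTerm (p q : ℝ) : ℝ :=
  if p = 0 then 0 else p * Real.log (q / p)

/-- Joint probability mass of `(A ω, B ω)` under a pmf `P` on a finite sample space. -/
noncomputable def jointP {Ω 𝒜 ℬ : Type*} [Fintype Ω] [DecidableEq 𝒜] [DecidableEq ℬ]
    (P : Ω → ℝ) (A : Ω → 𝒜) (B : Ω → ℬ) (a : 𝒜) (b : ℬ) : ℝ :=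
  ∑ ω ∈ univ.filter (fun ω => A ω = a ∧ B ω = b), P ω

/-- Probability mass of `A ω = a` under a pmf `P`. -/
noncomputable def margP {Ω 𝒜 : Type*} [Fintype Ω] [DecidableEq 𝒜]
    (P : Ω → ℝ) (A : Ω → 𝒜) (a : 𝒜) : ℝ :=
  ∑ ω ∈ univ.filter (fun ω => A ω = a), P ω

/-- Conditional entropy `H(A|B)` for a pmf `P` on a finite sample space. -/
noncomputable def condEnt {Ω 𝒜 ℬ : Type*} [Fintype Ω] [Fintype 𝒜] [Fintype ℬ]
    [DecidableEq 𝒜] [DecidableEq ℬ]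
    (P : Ω → ℝ) (A : Ω → 𝒜) (B : Ω → ℬ) : ℝ :=
  ∑ a, ∑ b, entTerm (jointP P A B a b) (margP P B b)

lemma entTerm_zero_left (q : ℝ) : entTerm 0 q = 0 := if_pos rfl

lemma mul_entTerm_div {c : ℝ} (hc : c ≠ 0) (p q : ℝ) :
    c * entTerm (p / c) (q / c) = entTerm p q := by
  by_cases hp : p = 0
  · simp [hp, entTerm_zero_left]
  · rw [entTerm, entTerm, if_neg (div_ne_zero hp hc), if_neg hp, div_div_div_cancel_right₀ hc]
    field_simp

lemma sum_entTerm_eq_entTerm_sum_add {ι : Type*} (s : Finset ι) {J : ι → ℝ}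
    (hJ : ∀ i ∈ s, 0 ≤ J i) {M : ℝ} (hM : ∑ i ∈ s, J i ≤ M) :
    ∑ i ∈ s, entTerm (J i) M =
      entTerm (∑ i ∈ s, J i) M + ∑ i ∈ s, entTerm (J i) (∑ i ∈ s, J i) := by
  rcases (sum_nonneg hJ).eq_or_lt with hS0 | hSpos
  · have hJ0 : ∀ i ∈ s, J i = 0 := (sum_eq_zero_iff_of_nonneg hJ).1 hS0.symm
    rw [← hS0, entTerm_zero_left, zero_add]
    exact sum_congr rfl fun i hi => by rw [hJ0 i hi, entTerm_zero_left, entTerm_zero_left]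
  · have hMpos : 0 < M := hSpos.trans_le hM
    rw [entTerm, if_neg hSpos.ne', sum_mul, ← sum_add_distrib]
    refine sum_congr rfl fun i _ => ?_
    by_cases hi : J i = 0
    · simp [hi, entTerm_zero_left]
    · have hsplit : M / J i = M / (∑ i ∈ s, J i) * ((∑ i ∈ s, J i) / J i) := by
        field_simp [hSpos.ne']
      rw [entTerm, entTerm, if_neg hi, if_neg hi, hsplit,
        Real.log_mul (div_ne_zero hMpos.ne' hSpos.ne') (div_ne_zero hSpos.ne' hi)]
      ring

section Marginals

variable {Ω 𝒜 ℬ : Type*} [Fintype Ω] [DecidableEq 𝒜] [DecidableEq ℬ]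

lemma jointP_eq_sum_ite (P : Ω → ℝ) (A : Ω → 𝒜) (B : Ω → ℬ) (a : 𝒜) (b : ℬ) :
    jointP P A B a b = ∑ ω, if A ω = a ∧ B ω = b then P ω else 0 :=
  sum_filter _ _

lemma margP_eq_sum_ite (P : Ω → ℝ) (A : Ω → 𝒜) (a : 𝒜) :
    margP P A a = ∑ ω, if A ω = a then P ω else 0 :=
  sum_filter _ _

lemma margP_eq_sum_jointP [Fintype 𝒜] (P : Ω → ℝ) (A : Ω → 𝒜) (B : Ω → ℬ) (b : ℬ) :
    margP P B b = ∑ a, jointP P A B a b := by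
  unfold margP jointP
  rw [← sum_fiberwise (univ.filter fun ω => B ω = b) A P]
  refine sum_congr rfl fun a _ => sum_congr ?_ fun _ _ => rfl
  rw [filter_filter]
  exact filter_congr fun ω _ => and_comm

lemma condEnt_zero [Fintype 𝒜] [Fintype ℬ] (A : Ω → 𝒜) (B : Ω → ℬ) :
    condEnt (fun _ => 0) A B = 0 := by
  simp [condEnt, jointP, entTerm_zero_left]

lemma mul_condEnt_div [Fintype 𝒜] [Fintype ℬ] (Q : Ω → ℝ) {c : ℝ} (hc : c ≠ 0)
    (A : Ω → 𝒜) (B : Ω → ℬ) :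
    c * condEnt (fun ω => Q ω / c) A B = condEnt Q A B := by
  simp only [condEnt, jointP, margP, ← sum_div, mul_sum, mul_entTerm_div hc]

lemma sum_mul_condEnt_normalize [Fintype 𝒜] [Fintype ℬ] {Q : Ω → ℝ} (hQ : ∀ ω, 0 ≤ Q ω)
    (A : Ω → 𝒜) (B : Ω → ℬ) :
    (∑ ω, Q ω) * condEnt (fun ω => Q ω / ∑ ω', Q ω') A B = condEnt Q A B := by
  rcases eq_or_ne (∑ ω, Q ω) 0 with h | h
  · have hQ0 : Q = fun _ => 0 :=
      funext fun ω => (sum_eq_zero_iff_of_nonneg fun ω _ => hQ ω).1 h ω (mem_univ ω)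
    rw [h, zero_mul, hQ0, condEnt_zero]
  · exact mul_condEnt_div Q h A B

end Marginals

section ErrorEvent

variable {Ω 𝒴 𝒵 : Type*} [Fintype Ω] [DecidableEq 𝒴] [DecidableEq 𝒵]
  {P : Ω → ℝ} {Y : Ω → 𝒴} {Z : Ω → 𝒵} {f : 𝒵 → 𝒴} {E : Ω → Bool}

lemma jointP_error_false (hE : ∀ ω, E ω = decide (f (Z ω) ≠ Y ω)) (z : 𝒵) :
    jointP P E Z false z = jointP P Y Z (f z) z := by
  simp only [jointP_eq_sum_ite]
  refine sum_congr rfl fun ω _ => ?_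
  by_cases hz : Z ω = z <;> simp [hE, hz, @eq_comm _ (f z)]

lemma jointP_error_true (z : 𝒵) :
    jointP P E Z true z = margP (fun ω => if E ω then P ω else 0) Z z := by
  simp only [jointP_eq_sum_ite, margP_eq_sum_ite]
  refine sum_congr rfl fun ω _ => ?_
  by_cases hz : Z ω = z <;> cases E ω <;> simp [hz]

lemma jointP_restrict_error (hE : ∀ ω, E ω = decide (f (Z ω) ≠ Y ω)) (y : 𝒴) (z : 𝒵) :
    jointP (fun ω => if E ω then P ω else 0) Y Z y z =
      if y = f z then 0 else jointP P Y Z y z := by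
  simp only [jointP_eq_sum_ite]
  split_ifs with hy
  · refine sum_eq_zero fun ω _ => ?_
    aesop
  · refine sum_congr rfl fun ω _ => ?_
    aesop

lemma margP_restrict_le (hP : ∀ ω, 0 ≤ P ω) (z : 𝒵) :
    margP (fun ω => if E ω then P ω else 0) Z z ≤ margP P Z z :=
  sum_le_sum fun ω _ => by split_ifs <;> simp only [le_refl, hP ω]

theorem condEnt_eq_condEnt_error_add [Fintype 𝒴] [Fintype 𝒵] (hP : ∀ ω, 0 ≤ P ω)
    (hE : ∀ ω, E ω = decide (f (Z ω) ≠ Y ω)) :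
    condEnt P Y Z = condEnt P E Z + condEnt (fun ω => if E ω then P ω else 0) Y Z := by
  set Q : Ω → ℝ := fun ω => if E ω then P ω else 0
  have hQ : ∀ ω, 0 ≤ Q ω := fun ω => ite_nonneg (hP ω) le_rfl
  unfold condEnt
  rw [sum_comm, sum_comm (f := fun y z => entTerm (jointP Q Y Z y z) (margP Q Z z)),
    Fintype.sum_bool, ← sum_add_distrib, ← sum_add_distrib]
  refine sum_congr rfl fun z _ => ?_
  have hsplit : ∑ y, entTerm (jointP P Y Z y z) (margP P Z z) =
      entTerm (jointP P Y Z (f z) z) (margP P Z z) +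
        ∑ y, entTerm (jointP Q Y Z y z) (margP P Z z) := by
    rw [← add_sum_erase _ _ (mem_univ (f z)), ← add_sum_erase univ _ (mem_univ (f z)),
      jointP_restrict_error hE, if_pos rfl, entTerm_zero_left, zero_add]
    refine congrArg _ (sum_congr rfl fun y hy => ?_)
    rw [jointP_restrict_error hE, if_neg (ne_of_mem_erase hy)]
  have hgroup := sum_entTerm_eq_entTerm_sum_add univ (J := fun y => jointP Q Y Z y z)
    (fun y _ => sum_nonneg fun ω _ => hQ ω)
    (margP_eq_sum_jointP Q Y Z z ▸ margP_restrict_le hP z)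
  rw [hsplit, hgroup, ← margP_eq_sum_jointP, jointP_error_true, jointP_error_false hE]
  ring

end ErrorEvent

theorem fano_first_decomposition_general
    {Ω 𝒴 𝒵 : Type*} [Fintype Ω] [Fintype 𝒴] [Fintype 𝒵]
    [DecidableEq 𝒴] [DecidableEq 𝒵]
    (P : Ω → ℝ) (hP_nonneg : ∀ ω, 0 ≤ P ω)
    (Y : Ω → 𝒴) (Z : Ω → 𝒵) (f : 𝒵 → 𝒴)
    (E : Ω → Bool) (hE : ∀ ω, E ω = decide (f (Z ω) ≠ Y ω))
    (pe : ℝ) (hpe : pe = ∑ ω ∈ univ.filter (fun ω => E ω = true), P ω)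
    -- the measure conditioned on the error event {E = 1}
    (Pcond : Ω → ℝ)
    (hPcond : ∀ ω, Pcond ω = (if E ω = true then P ω else 0) / pe) :
    condEnt P Y Z = condEnt P E Z + pe * condEnt Pcond Y Z := by
  have hpe_sum : pe = ∑ ω, if E ω then P ω else 0 := hpe.trans (sum_filter _ _)
  have hPcond_eq : Pcond = fun ω => (if E ω then P ω else 0) / pe := funext hPcond
  rw [hPcond_eq, hpe_sum, sum_mul_condEnt_normalize fun ω => ite_nonneg (hP_nonneg ω) le_rfl]
  exact condEnt_eq_condEnt_error_add hP_nonneg hE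

/-- Fano's first decomposition.  With `Ỹ = f(Z)` an estimator of `Y`,
`E` the indicator of the error event `Ỹ ≠ Y`, and `p_e = P(E = 1)`:
`H(Y|Z) = H(E|Z) + p_e · H(Y | E = 1, Z)`, where `H(Y | E=1, Z)` is the
conditional entropy computed under the measure conditioned on `{E = 1}`. -/
theorem fano_first_decomposition
    {Ω 𝒴 𝒵 : Type*} [Fintype Ω] [Fintype 𝒴] [Fintype 𝒵]
    [DecidableEq 𝒴] [DecidableEq 𝒵]
    (P : Ω → ℝ) (hP_nonneg : ∀ ω, 0 ≤ P ω) (hP_sum : ∑ ω, P ω = 1)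
    (Y : Ω → 𝒴) (Z : Ω → 𝒵) (f : 𝒵 → 𝒴)
    (E : Ω → Bool) (hE : ∀ ω, E ω = decide (f (Z ω) ≠ Y ω))
    (pe : ℝ) (hpe : pe = ∑ ω ∈ univ.filter (fun ω => E ω = true), P ω)
    -- the measure conditioned on the error event {E = 1}
    (Pcond : Ω → ℝ)
    (hPcond : ∀ ω, Pcond ω = (if E ω = true then P ω else 0) / pe) :
    condEnt P Y Z = condEnt P E Z + pe * condEnt Pcond Y Z :=
  fano_first_decomposition_general P hP_nonneg Y Z f E hE pe hpe Pcond hPcond
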